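/- arXiv:1207.4361 — 2 statements merged into one kernel-verified Lean document; each statement's English description precedes it below -/
import Mathlib

section
/- If f is a nonconstant rational function (viewed as a holomorphic map of the Riemann sphere to itself) with critical points z₁,…,z_m of multiplicities v₁,…,v_m, then deg f = 1 + (v₁ + ⋯ + v_m)/2 (Riemann–Hurwitz formula for the sphere). -/
/-! The Wronskian `W = P'Q - PQ'` is nonzero because `P` and `Q` are coprime and not both
constant; its roots, counted with multiplicity, are the finite critical points, so they
contribute `deg W`. In the chart `w = 1/z` at `∞` the numerator and denominator become the
reflections of `P` and `Q` in degree `n = deg f`, and their Wronskian `W̃` satisfies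
`X² W̃ = -reflect (2n) W`. Hence `∞` has multiplicity `2n - 2 - deg W`, and the
multiplicities sum to `2n - 2`. -/

open Polynomial OnePoint

namespace Polynomial

section CommRing

variable {R : Type*} [CommRing R]

theorem reflect_eq_X_pow_mul_reverse {N : ℕ} {f : R[X]} (hf : f.natDegree ≤ N) :
    reflect N f = X ^ (N - f.natDegree) * f.reverse := by
  have h := reflect_mul 1 f (natDegree_one.trans_le (Nat.zero_le (N - f.natDegree))) le_rfl
  rwa [Nat.sub_add_cancel hf, one_mul, reflect_one] at h

theorem natTrailingDegree_reflect {N : ℕ} {f : R[X]} (hf0 : f ≠ 0) (hf : f.natDegree ≤ N) :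
    (reflect N f).natTrailingDegree = N - f.natDegree := by
  rw [reflect_eq_X_pow_mul_reverse hf, mul_comm (X ^ _),
    natTrailingDegree_mul_X_pow (reverse_eq_zero.not.mpr hf0), natTrailingDegree_reverse, zero_add]

theorem X_mul_reflect_X_mul {N : ℕ} {f : R[X]} (hf : f.natDegree < N) :
    X * reflect N (X * f) = reflect N f := by
  obtain ⟨M, rfl⟩ : ∃ M, N = M + 1 := Nat.exists_eq_add_one_of_ne_zero (by omega)
  have hfM : f.natDegree ≤ M := Nat.le_of_lt_succ hf
  have h := reflect_mul 1 f (natDegree_one.trans_le zero_le_one) hfM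
  rw [one_mul, reflect_one, pow_one] at h
  rw [add_comm M, reflect_mul X f natDegree_X_le hfM, reflect_one_X, one_mul, h]

theorem X_mul_derivative_X_pow (n : ℕ) : X * derivative (X ^ n : R[X]) = (n : R[X]) * X ^ n := by
  rw [derivative_X_pow, C_eq_natCast]
  cases n with
  | zero => simp
  | succ n => rw [add_tsub_cancel_right, pow_succ]; ring

/-- `reflect N` sends `X ^ i` to `X ^ (N - i)`, so it turns the Euler operator `X · d/dX` into
`N - X · d/dX`. -/
theorem X_mul_derivative_reflect {N : ℕ} {f : R[X]} (hf : f.natDegree ≤ N) :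
    X * derivative (reflect N f) = (N : R[X]) * reflect N f - reflect N (X * derivative f) := by
  refine induction_with_natDegree_le (fun f =>
      X * derivative (reflect N f) = (N : R[X]) * reflect N f - reflect N (X * derivative f))
    N (by simp) (fun n r _ hn => ?_) (fun f g _ _ hf hg => ?_) f hf
  · obtain ⟨k, rfl⟩ := Nat.exists_eq_add_of_le hn
    have hX (j : ℕ) : X * derivative (C r * X ^ j) = C (r * j) * X ^ j := by
      rw [derivative_C_mul, mul_left_comm, X_mul_derivative_X_pow, C_mul, C_eq_natCast]
      ring
    rw [reflect_C_mul_X_pow, revAt_le hn, hX, hX, reflect_C_mul_X_pow, revAt_le hn,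
      add_tsub_cancel_left, C_mul, C_mul, C_eq_natCast, C_eq_natCast]
    push_cast
    ring
  · simp only [reflect_add, derivative_add, mul_add, hf, hg]
    ring

theorem natDegree_X_mul_derivative_le (p : R[X]) :
    (X * derivative p).natDegree ≤ p.natDegree := by
  rcases eq_or_ne p.natDegree 0 with h | h
  · rw [derivative_of_natDegree_zero h, mul_zero, natDegree_zero]; exact Nat.zero_le _
  · calc (X * derivative p).natDegree ≤ 1 + (derivative p).natDegree :=
          natDegree_mul_le.trans (Nat.add_le_add_right natDegree_X_le _)
      _ ≤ p.natDegree := by have := natDegree_derivative_lt h; omega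

theorem X_sq_mul_wronskian_reflect {N : ℕ} {P Q : R[X]} (hP : P.natDegree ≤ N)
    (hQ : Q.natDegree ≤ N) :
    X ^ 2 * wronskian (reflect N Q) (reflect N P) = -reflect (2 * N) (wronskian Q P) := by
  have hX : X * reflect (2 * N) (X * wronskian Q P) = reflect (2 * N) (wronskian Q P) := by
    rcases eq_or_ne (wronskian Q P) 0 with h | h
    · rw [h, mul_zero, reflect_zero, mul_zero]
    · exact X_mul_reflect_X_mul ((natDegree_wronskian_lt_add h).trans_le (by omega))
  have hR : reflect N P * reflect N (X * derivative Q) - reflect N Q * reflect N (X * derivative P)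
      = -reflect (2 * N) (X * wronskian Q P) := by
    rw [← reflect_mul _ _ hP ((natDegree_X_mul_derivative_le Q).trans hQ),
      ← reflect_mul _ _ hQ ((natDegree_X_mul_derivative_le P).trans hP), ← two_mul,
      ← reflect_sub, ← reflect_neg, wronskian]
    ring_nf
  rw [wronskian]
  linear_combination (X * reflect N Q) * X_mul_derivative_reflect hP
    - (X * reflect N P) * X_mul_derivative_reflect hQ + X * hR - hX

theorem natTrailingDegree_wronskian_reflect {N : ℕ} {P Q : R[X]} (hP : P.natDegree ≤ N)
    (hQ : Q.natDegree ≤ N) (hW : wronskian Q P ≠ 0) :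
    (wronskian (reflect N Q) (reflect N P)).natTrailingDegree + 2 + (wronskian Q P).natDegree
      = 2 * N := by
  have hWdeg : (wronskian Q P).natDegree ≤ 2 * N :=
    (natDegree_wronskian_lt_add hW).le.trans (by omega)
  have key := X_sq_mul_wronskian_reflect hP hQ
  have hWt : wronskian (reflect N Q) (reflect N P) ≠ 0 := by
    intro h
    rw [h, mul_zero, eq_comm, neg_eq_zero, reflect_eq_zero_iff] at key
    exact hW key
  have := congrArg natTrailingDegree key
  rw [mul_comm (X ^ _), natTrailingDegree_mul_X_pow hWt, natTrailingDegree_neg,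
    natTrailingDegree_reflect hW hWdeg] at this
  omega

end CommRing

theorem wronskian_ne_zero_of_isCoprime {R : Type*} [CommRing R] [IsDomain R] [CharZero R]
    {P Q : R[X]} (hcop : IsCoprime Q P) (hdeg : 0 < max P.natDegree Q.natDegree) :
    wronskian Q P ≠ 0 := by
  rw [Ne, hcop.wronskian_eq_zero_iff, derivative_eq_zero, derivative_eq_zero]
  omega

theorem finsum_rootMultiplicity_eq_natDegree {k : Type*} [Field k] [IsAlgClosed k] (p : k[X]) :
    ∑ᶠ x, rootMultiplicity x p = p.natDegree := by
  classical
  rcases eq_or_ne p 0 with rfl | hp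
  · simp
  rw [finsum_eq_sum_of_support_subset _ (s := p.roots.toFinset) fun x hx => by
      simpa [hp] using Function.mem_support.mp hx, ← IsAlgClosed.card_roots_eq_natDegree,
    ← Multiset.toFinset_sum_count_eq]
  exact Finset.sum_congr rfl fun x _ => (count_roots p).symm

end Polynomial

theorem finsum_eq_sum_comp_of_support_subset_range {α ι M : Type*} [AddCommMonoid M] [Fintype ι]
    {f : α → M} {z : ι → α} (hz : Function.Injective z)
    (hf : Function.support f ⊆ Set.range z) :
    ∑ᶠ w, f w = ∑ i, f (z i) := by
  classical
  rw [finsum_eq_sum_of_support_subset f (s := Finset.univ.image z) (by simpa using hf),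
    Finset.sum_image hz.injOn]

theorem OnePoint.finsum_eq_infty_add {X M : Type*} [AddCommMonoid M] {f : OnePoint X → M}
    (hf : (Function.support fun x : X => f x).Finite) : ∑ᶠ w, f w = f ∞ + ∑ᶠ x : X, f x :=
  finsum_option hf

theorem riemann_hurwitz_sphere_general (P Q : Polynomial ℂ) (hcop : IsCoprime P Q)
    (hnc : 0 < max P.natDegree Q.natDegree)
    (m : ℕ) (z : Fin m → OnePoint ℂ) (hz : Function.Injective z)
    (v : Fin m → ℕ)
    (W : Polynomial ℂ)
    (hW : W = derivative P * Q - P * derivative Q)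
    (Pt Qt Wt : Polynomial ℂ)
    (hPt : Pt = X ^ (max P.natDegree Q.natDegree - P.natDegree) * P.reverse)
    (hQt : Qt = X ^ (max P.natDegree Q.natDegree - Q.natDegree) * Q.reverse)
    (hWt : Wt = derivative Pt * Qt - Pt * derivative Qt)
    (ram : OnePoint ℂ → ℕ)
    (hramFin : ∀ x : ℂ, ram (x : OnePoint ℂ) = rootMultiplicity x W)
    (hramInf : ram ∞ = rootMultiplicity 0 Wt)
    (hcrit : ∀ i, v i = ram (z i) ∧ 0 < v i)
    (hall : ∀ w : OnePoint ℂ, w ∉ Set.range z → ram w = 0) :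
    max P.natDegree Q.natDegree = 1 + (∑ i, v i) / 2 := by
  have hPn := le_max_left P.natDegree Q.natDegree
  have hQn := le_max_right P.natDegree Q.natDegree
  rw [← reflect_eq_X_pow_mul_reverse hPn] at hPt
  rw [← reflect_eq_X_pow_mul_reverse hQn] at hQt
  obtain rfl : W = wronskian Q P := by rw [hW, wronskian]; ring
  obtain rfl : Wt = wronskian Qt Pt := by rw [hWt, wronskian]; ring
  subst hPt hQt
  have hsupp : Function.support ram ⊆ Set.range z := fun w hw => by_contra fun h => hw (hall w h)
  have hfin : (Function.support fun x : ℂ => ram x).Finite :=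
    ((Set.finite_range z).preimage coe_injective.injOn).subset fun _ hx => hsupp hx
  have hsum : ∑ i, v i = ram ∞ + (wronskian Q P).natDegree := calc
    ∑ i, v i = ∑ i, ram (z i) := Finset.sum_congr rfl fun i _ => (hcrit i).1
    _ = ∑ᶠ w, ram w := (finsum_eq_sum_comp_of_support_subset_range hz hsupp).symm
    _ = ram ∞ + ∑ᶠ x : ℂ, ram x := OnePoint.finsum_eq_infty_add hfin
    _ = ram ∞ + (wronskian Q P).natDegree := by
      simp only [hramFin, finsum_rootMultiplicity_eq_natDegree]
  have hdeg := natTrailingDegree_wronskian_reflect hPn hQn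
    (wronskian_ne_zero_of_isCoprime hcop.symm hnc)
  rw [hsum, hramInf, rootMultiplicity_eq_natTrailingDegree']
  omega

/-- Riemann–Hurwitz formula for a nonconstant rational function `f = P/Q` on the
Riemann sphere.  Finite critical points are counted through the Wronskian
`W = P' Q - P Q'` (the multiplicity of a finite critical point `x` is the root
multiplicity of `x` in `W`), and the multiplicity at `∞` is read off from the
Wronskian of the reversed polynomials `P̃(z) = z^n P(1/z)`, `Q̃(z) = z^n Q(1/z)`.
If `z₁, …, z_m` are exactly the critical points of `f`, with multiplicities
`v₁, …, v_m`, then `deg f = 1 + (v₁ + ⋯ + v_m)/2`. -/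
theorem riemann_hurwitz_sphere (P Q : Polynomial ℂ) (hcop : IsCoprime P Q)
    (hQ : Q ≠ 0) (hnc : 0 < max P.natDegree Q.natDegree)
    (m : ℕ) (z : Fin m → OnePoint ℂ) (hz : Function.Injective z)
    (v : Fin m → ℕ)
    (W : Polynomial ℂ)
    (hW : W = derivative P * Q - P * derivative Q)
    (Pt Qt Wt : Polynomial ℂ)
    (hPt : Pt = X ^ (max P.natDegree Q.natDegree - P.natDegree) * P.reverse)
    (hQt : Qt = X ^ (max P.natDegree Q.natDegree - Q.natDegree) * Q.reverse)
    (hWt : Wt = derivative Pt * Qt - Pt * derivative Qt)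
    (ram : OnePoint ℂ → ℕ)
    (hramFin : ∀ x : ℂ, ram (x : OnePoint ℂ) = rootMultiplicity x W)
    (hramInf : ram ∞ = rootMultiplicity 0 Wt)
    (hcrit : ∀ i, v i = ram (z i) ∧ 0 < v i)
    (hall : ∀ w : OnePoint ℂ, w ∉ Set.range z → ram w = 0) :
    max P.natDegree Q.natDegree = 1 + (∑ i, v i) / 2 :=
  riemann_hurwitz_sphere_general P Q hcop hnc m z hz v W hW Pt Qt Wt hPt hQt hWt ram hramFin hramInf
    hcrit hall
end

section
/- Given a sequence of triples (z_i, ν_i, b_i), i=1,…,s, with all z_i ∈ ℂ distinct, at least 3 distinct values among the b_i, Σν_i even, and for each value b the total multiplicity Σ_{b_j = b} ν_j ≤ (Σ_l ν_l)/2, set n = 1 + (Σν_i)/2. Then the kernel of the associated critical evaluation map A on pairs (P,Q) of polynomials of degree ≤ n is at most one-dimensional. -/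
/-!
If `(P, Q)` and `(p, q)` lie in the kernel, then `P q - p Q` vanishes to order `ν i + 1` at every
`z i`: in total `2n + s - 2 > 2n` zeros against degree `≤ 2n`, so `P q = p Q`. Writing `P = g P₀`,
`Q = g Q₀` with `P₀, Q₀` coprime gives `p = g' P₀`, `q = g' Q₀`, and it remains to show that `g`
and `g'` are proportional; both have degree `≤ n - N`, where `N = max (deg P₀) (deg Q₀)`.

If the Wronskian `W` of `P₀, Q₀` vanishes, both are constant and `P₀ / Q₀` is a single value `o`;
then `g` vanishes to order `ν i + 1` at each `z i` with `b i ≠ o`, and the balance condition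
together with the three distinct values makes this more than `n` zeros, which is impossible.
Otherwise `deg W < 2N`. If `P₀ - b i Q₀` vanishes to order `e i` at `z i`, then `W` vanishes there
to order `e i - 1`, and `g`, `g'` to order `ν i + 1 - e i`; the product `R` of these factors
divides `g` and `g'` and has degree `≥ ∑ ν - deg W ≥ n - N`, so `g` and `g'` are both constant
multiples of `R`.
-/

open Polynomial Finset

section Polynomial

variable {K : Type*} [Field K]

theorem pow_succ_dvd_of_iterate_derivative_eval_eq_zero [CharZero K] {f : K[X]} {a : K} {m : ℕ}
    (h : ∀ l ≤ m, (derivative^[l] f).eval a = 0) : (X - C a) ^ (m + 1) ∣ f := by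
  rcases eq_or_ne f 0 with rfl | hf
  · exact dvd_zero _
  · exact (le_rootMultiplicity_iff hf).mp (lt_rootMultiplicity_of_isRoot_iterate_derivative hf h)

theorem pow_succ_dvd_sub_C_mul_of_iterate_derivative_eval_eq [CharZero K] {a w : K} {m : ℕ}
    {A B : K[X]} (h : ∀ l ≤ m, (derivative^[l] A).eval a = w * (derivative^[l] B).eval a) :
    (X - C a) ^ (m + 1) ∣ A - C w * B := by
  refine pow_succ_dvd_of_iterate_derivative_eval_eq_zero fun l hl => ?_
  simp only [iterate_derivative_sub, iterate_derivative_C_mul, eval_sub, eval_mul, eval_C,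
    h l hl, sub_self]

theorem prod_X_sub_C_pow_dvd {ι : Type*} {z : ι → K} (hz : Function.Injective z)
    {t : Finset ι} {m : ι → ℕ} {f : K[X]} (h : ∀ i ∈ t, (X - C (z i)) ^ m i ∣ f) :
    (∏ i ∈ t, (X - C (z i)) ^ m i) ∣ f :=
  prod_dvd_of_coprime (fun _ _ _ _ hij => (pairwise_coprime_X_sub_C hz hij).pow) h

theorem natDegree_prod_X_sub_C_pow {R ι : Type*} [CommRing R] [Nontrivial R] (z : ι → R)
    (t : Finset ι) (m : ι → ℕ) : (∏ i ∈ t, (X - C (z i)) ^ m i).natDegree = ∑ i ∈ t, m i := by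
  rw [natDegree_prod_of_monic _ _ fun i _ => (monic_X_sub_C (z i)).pow (m i)]
  simp only [(monic_X_sub_C _).natDegree_pow, natDegree_X_sub_C, mul_one]

theorem sum_le_natDegree_of_pow_dvd {ι : Type*} {z : ι → K} (hz : Function.Injective z)
    {t : Finset ι} {m : ι → ℕ} {f : K[X]} (hf : f ≠ 0)
    (h : ∀ i ∈ t, (X - C (z i)) ^ m i ∣ f) : ∑ i ∈ t, m i ≤ f.natDegree :=
  natDegree_prod_X_sub_C_pow z t m ▸ natDegree_le_of_dvd (prod_X_sub_C_pow_dvd hz h) hf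

theorem pow_sub_rootMultiplicity_dvd_of_pow_dvd_mul {R : Type*} [CommRing R] [IsDomain R]
    {G F : R[X]} {a : R} {m : ℕ} (hF : F ≠ 0) (h : (X - C a) ^ m ∣ G * F) :
    (X - C a) ^ (m - F.rootMultiplicity a) ∣ G := by
  rcases eq_or_ne G 0 with rfl | hG
  · exact dvd_zero _
  rw [← le_rootMultiplicity_iff hG]
  rw [← le_rootMultiplicity_iff (mul_ne_zero hG hF), rootMultiplicity_mul (mul_ne_zero hG hF)] at h
  omega

theorem exists_eq_C_mul_of_dvd_of_natDegree_le {R : Type*} [CommRing R] [IsDomain R]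
    {r f : R[X]} (hdvd : r ∣ f) (hdeg : f.natDegree ≤ r.natDegree) : ∃ c, f = C c * r := by
  obtain ⟨v, rfl⟩ := hdvd
  rcases eq_or_ne r 0 with rfl | hr
  · exact ⟨0, by simp⟩
  rcases eq_or_ne v 0 with rfl | hv
  · exact ⟨0, by simp⟩
  rw [natDegree_mul hr hv] at hdeg
  exact ⟨v.coeff 0, by rw [← eq_C_of_natDegree_eq_zero (by omega), mul_comm]⟩

theorem natDegree_le_sub_max_of_natDegree_mul_le {R : Type*} [CommRing R] [IsDomain R]
    {g A B : R[X]} {n : ℕ} (hAB : A ≠ 0 ∨ B ≠ 0) (hA : (g * A).natDegree ≤ n)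
    (hB : (g * B).natDegree ≤ n) : g.natDegree ≤ n - max A.natDegree B.natDegree := by
  rcases eq_or_ne g 0 with rfl | hg
  · simp
  have key : ∀ F : R[X], (g * F).natDegree ≤ n → F = 0 ∨ g.natDegree + F.natDegree ≤ n :=
    fun F hF => (eq_or_ne F 0).imp_right fun hF0 => natDegree_mul hg hF0 ▸ hF
  rcases key A hA with rfl | hA' <;> rcases key B hB with rfl | hB'
  · exact (hAB.elim id id rfl).elim
  · rw [natDegree_zero]; omega
  · rw [natDegree_zero]; omega
  · omega

end Polynomial

theorem IsCoprime.exists_eq_mul_of_mul_eq_mul {R : Type*} [CommRing R] {a b c d : R}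
    (h : IsCoprime a b) (e : a * d = c * b) : ∃ k, c = k * a ∧ d = k * b := by
  obtain ⟨u, v, huv⟩ := h
  exact ⟨u * c + v * d, by linear_combination (-c) * huv - v * e,
    by linear_combination (-d) * huv + u * e⟩

theorem exists_isCoprime_eq_mul {R : Type*} [CommRing R] [IsDomain R] [IsBezout R] [GCDMonoid R]
    {A B : R} (h : A ≠ 0 ∨ B ≠ 0) :
    ∃ g A₀ B₀, g ≠ 0 ∧ IsCoprime A₀ B₀ ∧ A = g * A₀ ∧ B = g * B₀ := by
  obtain ⟨A₀, B₀, hA, hB, hu⟩ := extract_gcd A B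
  refine ⟨gcd A B, A₀, B₀, ?_, (gcd_isUnit_iff_isRelPrime.mp hu).isCoprime, hA, hB⟩
  rw [Ne, _root_.gcd_eq_zero_iff]
  tauto

section numeratorSub

variable {R : Type*} [CommRing R]

/-- Numerator of `A / B - b`; for `b = ∞`, encoded as `none`, it is the numerator `B` of
`1 / (A / B)`. -/
noncomputable def numeratorSub (b : Option R) (A B : R[X]) : R[X] :=
  b.elim B fun w => A - C w * B

theorem numeratorSub_mul (b : Option R) (g A B : R[X]) :
    numeratorSub b (g * A) (g * B) = g * numeratorSub b A B := by
  cases b with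
  | none => rfl
  | some w => simp only [numeratorSub, Option.elim]; ring

theorem natDegree_numeratorSub_le (b : Option R) (A B : R[X]) :
    (numeratorSub b A B).natDegree ≤ max A.natDegree B.natDegree := by
  cases b with
  | none => exact le_max_right _ _
  | some w =>
    exact (natDegree_sub_le _ _).trans (max_le_max le_rfl (natDegree_C_mul_le w B))

theorem dvd_mul_sub_mul_of_dvd_numeratorSub {b : Option R} {d P Q p q : R[X]}
    (h : d ∣ numeratorSub b P Q) (h' : d ∣ numeratorSub b p q) : d ∣ P * q - p * Q := by
  cases b with
  | none => exact dvd_sub (h'.mul_left P) (h.mul_left p)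
  | some w =>
    have : P * q - p * Q = numeratorSub (some w) P Q * q - numeratorSub (some w) p q * Q := by
      simp only [numeratorSub, Option.elim]; ring
    rw [this]
    exact dvd_sub (h.mul_right q) (h'.mul_right Q)

theorem wronskian_eq_of_numeratorSub_some (w : R) (A B : R[X]) :
    wronskian A B = wronskian (numeratorSub (some w) A B) B := by
  simp only [wronskian, numeratorSub, Option.elim, derivative_sub, derivative_C_mul]
  ring

theorem pow_sub_one_dvd_wronskian_of_pow_dvd_numeratorSub {b : Option R} {A B d : R[X]} {e : ℕ}
    (h : d ^ e ∣ numeratorSub b A B) : d ^ (e - 1) ∣ wronskian A B := by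
  have hF := (pow_dvd_pow d (Nat.sub_le e 1)).trans h
  have hF' := pow_sub_one_dvd_derivative_of_pow_dvd h
  cases b with
  | none => exact dvd_sub (hF'.mul_left A) (hF.mul_left _)
  | some w =>
    rw [wronskian_eq_of_numeratorSub_some]
    exact dvd_sub (hF.mul_right _) (hF'.mul_right _)

theorem numeratorSub_ne_zero_of_wronskian_ne_zero {b : Option R} {A B : R[X]}
    (hW : wronskian A B ≠ 0) : numeratorSub b A B ≠ 0 := by
  intro h
  cases b with
  | none => exact hW (by simpa [numeratorSub] using congrArg (wronskian A) h)
  | some w => exact hW (by rw [wronskian_eq_of_numeratorSub_some, h, wronskian_zero_left])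

theorem eq_of_numeratorSub_eq_zero [IsDomain R] {b b' : Option R} {A B : R[X]}
    (hAB : IsCoprime A B) (h : numeratorSub b A B = 0) (h' : numeratorSub b' A B = 0) :
    b = b' := by
  have hAB0 : ¬(A = 0 ∧ B = 0) := by
    rintro ⟨rfl, rfl⟩
    exact not_isUnit_zero (isCoprime_zero_right.mp hAB)
  cases b <;> cases b' <;> simp only [numeratorSub, Option.elim, sub_eq_zero] at h h'
  · rfl
  · exact absurd ⟨by simpa [h] using h', h⟩ hAB0
  · exact absurd ⟨by simpa [h'] using h, h'⟩ hAB0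
  · have hB : B ≠ 0 := fun hB => hAB0 ⟨by simpa [hB] using h, hB⟩
    rw [C_inj.mp (mul_right_cancel₀ hB (h.symm.trans h'))]

end numeratorSub

section Kernel

variable {K : Type*} [Field K] {ι : Type*} [Fintype ι] {z : ι → K} {ν : ι → ℕ} {b : ι → Option K}
  {M : ℕ}

theorem mul_eq_mul_of_pow_dvd_numeratorSub (hι : 3 ≤ Fintype.card ι)
    (hz : Function.Injective z) (hM : ∑ i, ν i = M + M) {P Q p q : K[X]}
    (hP : P.natDegree ≤ M + 1) (hQ : Q.natDegree ≤ M + 1)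
    (hp : p.natDegree ≤ M + 1) (hq : q.natDegree ≤ M + 1)
    (hdvd : ∀ i, (X - C (z i)) ^ (ν i + 1) ∣ numeratorSub (b i) P Q)
    (hdvd' : ∀ i, (X - C (z i)) ^ (ν i + 1) ∣ numeratorSub (b i) p q) : P * q = p * Q := by
  by_contra hne
  have hsum := sum_le_natDegree_of_pow_dvd hz (sub_ne_zero.mpr hne) (t := univ)
    fun i _ => dvd_mul_sub_mul_of_dvd_numeratorSub (hdvd i) (hdvd' i)
  have hdeg : (P * q - p * Q).natDegree ≤ (M + 1) + (M + 1) :=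
    (natDegree_sub_le _ _).trans (max_le (natDegree_mul_le.trans (add_le_add hP hq))
      (natDegree_mul_le.trans (add_le_add hp hQ)))
  rw [sum_add_distrib, hM, sum_const, card_univ, smul_eq_mul, mul_one] at hsum
  omega

theorem add_two_le_sum_succ_of_eq_on_compl {β : Type*} [DecidableEq β] {c : ι → β}
    (hc : 3 ≤ (univ.image c).card) (hM : ∑ i, ν i = M + M)
    (hhalf : ∀ i, ∑ j ∈ univ.filter (fun j => c j = c i), ν j ≤ M)
    {S : Finset ι} (hS : ∀ i ∉ S, ∀ j ∉ S, c i = c j) : M + 2 ≤ ∑ i ∈ S, (ν i + 1) := by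
  classical
  rw [sum_add_distrib, sum_const, smul_eq_mul, mul_one]
  have hsplit := sum_add_sum_compl S ν
  rcases Sᶜ.eq_empty_or_nonempty with hSc | ⟨i₀, hi₀⟩
  · rw [compl_eq_empty_iff] at hSc
    subst hSc
    have := (card_image_le (s := univ) (f := c)).trans_eq card_univ
    rw [card_univ]
    omega
  · have hcompl : ∑ j ∈ Sᶜ, ν j ≤ M := by
      refine (sum_le_sum_of_subset fun j hj => ?_).trans (hhalf i₀)
      rw [mem_compl] at hi₀ hj
      simpa using hS j hj i₀ hi₀
    have himage : univ.image c ⊆ S.image c ∪ {c i₀} := by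
      intro v hv
      obtain ⟨j, -, rfl⟩ := mem_image.mp hv
      by_cases hj : j ∈ S
      · exact mem_union_left _ (mem_image_of_mem c hj)
      · rw [mem_compl] at hi₀
        exact mem_union_right _ (mem_singleton.mpr (hS j hj i₀ hi₀))
    have := (card_le_card himage).trans (card_union_le _ _)
    have := card_image_le (s := S) (f := c)
    rw [card_singleton] at *
    omega

theorem add_two_le_natDegree_of_natDegree_eq_zero [DecidableEq K] (hz : Function.Injective z)
    (hb3 : 3 ≤ (univ.image b).card) (hM : ∑ i, ν i = M + M)
    (hhalf : ∀ i, ∑ j ∈ univ.filter (fun j => b j = b i), ν j ≤ M)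
    {A B g : K[X]} (hAB : IsCoprime A B) (hA : A.natDegree = 0) (hB : B.natDegree = 0)
    (hg : g ≠ 0) (hdvd : ∀ i, (X - C (z i)) ^ (ν i + 1) ∣ g * numeratorSub (b i) A B) :
    M + 2 ≤ g.natDegree := by
  classical
  let S := univ.filter fun i => numeratorSub (b i) A B ≠ 0
  have hS : ∀ i ∉ S, ∀ j ∉ S, b i = b j := by
    intro i hi j hj
    simp only [S, mem_filter, mem_univ, true_and, not_not] at hi hj
    exact eq_of_numeratorSub_eq_zero hAB hi hj
  refine (add_two_le_sum_succ_of_eq_on_compl hb3 hM hhalf hS).trans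
    (sum_le_natDegree_of_pow_dvd hz hg fun i hi => ?_)
  have hconst : (numeratorSub (b i) A B).natDegree = 0 := by
    simpa [hA, hB] using natDegree_numeratorSub_le (b i) A B
  have hunit : IsUnit (numeratorSub (b i) A B) := isUnit_iff_degree_eq_zero.mpr <| by
    rw [degree_eq_natDegree (mem_filter.mp hi).2, hconst, Nat.cast_zero]
  exact hunit.dvd_mul_right.mp (hdvd i)

variable (ν b) in
theorem exists_dvd_of_wronskian_ne_zero (hz : Function.Injective z) {A B : K[X]} (hW : wronskian A B ≠ 0) :
    ∃ R : K[X], ∑ i, ν i ≤ R.natDegree + (wronskian A B).natDegree ∧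
      ∀ G, (∀ i, (X - C (z i)) ^ (ν i + 1) ∣ G * numeratorSub (b i) A B) → R ∣ G := by
  let e i := (numeratorSub (b i) A B).rootMultiplicity (z i)
  refine ⟨∏ i, (X - C (z i)) ^ (ν i + 1 - e i), ?_, fun G hG => prod_X_sub_C_pow_dvd hz
    fun i _ => pow_sub_rootMultiplicity_dvd_of_pow_dvd_mul
      (numeratorSub_ne_zero_of_wronskian_ne_zero hW) (hG i)⟩
  have hWdvd := sum_le_natDegree_of_pow_dvd hz hW (t := univ) (m := fun i => e i - 1)
    fun i _ => pow_sub_one_dvd_wronskian_of_pow_dvd_numeratorSub (pow_rootMultiplicity_dvd _ _)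
  rw [natDegree_prod_X_sub_C_pow]
  calc ∑ i, ν i ≤ ∑ i, ((ν i + 1 - e i) + (e i - 1)) := sum_le_sum fun i _ => by omega
    _ = _ := sum_add_distrib
    _ ≤ _ := Nat.add_le_add_left hWdvd _

theorem exists_C_mul_eq_C_mul_of_pow_dvd_mul_numeratorSub [CharZero K] [DecidableEq K]
    (hz : Function.Injective z) (hb3 : 3 ≤ (univ.image b).card) (hM : ∑ i, ν i = M + M)
    (hhalf : ∀ i, ∑ j ∈ univ.filter (fun j => b j = b i), ν j ≤ M)
    {A B g g' : K[X]} (hAB : IsCoprime A B) (hg : g ≠ 0)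
    (hgA : (g * A).natDegree ≤ M + 1) (hgB : (g * B).natDegree ≤ M + 1)
    (hg'A : (g' * A).natDegree ≤ M + 1) (hg'B : (g' * B).natDegree ≤ M + 1)
    (hdvd : ∀ i, (X - C (z i)) ^ (ν i + 1) ∣ g * numeratorSub (b i) A B)
    (hdvd' : ∀ i, (X - C (z i)) ^ (ν i + 1) ∣ g' * numeratorSub (b i) A B) :
    ∃ c d : K, (c ≠ 0 ∨ d ≠ 0) ∧ C c * g = C d * g' := by
  have hdeg := natDegree_le_sub_max_of_natDegree_mul_le hAB.ne_zero_or_ne_zero hgA hgB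
  have hdeg' := natDegree_le_sub_max_of_natDegree_mul_le hAB.ne_zero_or_ne_zero hg'A hg'B
  by_cases hW : wronskian A B = 0
  · obtain ⟨hA, hB⟩ := hAB.wronskian_eq_zero_iff.mp hW
    have hA := derivative_eq_zero.mp hA
    have hB := derivative_eq_zero.mp hB
    have := add_two_le_natDegree_of_natDegree_eq_zero hz hb3 hM hhalf hAB hA hB hg hdvd
    omega
  · obtain ⟨R, hR, hRdvd⟩ := exists_dvd_of_wronskian_ne_zero ν b hz hW
    have hWdeg := natDegree_wronskian_lt_add hW
    obtain ⟨c, rfl⟩ := exists_eq_C_mul_of_dvd_of_natDegree_le (hRdvd g hdvd) (by omega)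
    obtain ⟨d, rfl⟩ := exists_eq_C_mul_of_dvd_of_natDegree_le (hRdvd g' hdvd') (by omega)
    refine ⟨d, c, Or.inr fun hc => hg (by rw [hc, C_0, zero_mul]), by ring⟩

end Kernel

/-- The kernel of the critical evaluation map is at most one-dimensional.
Given admissible data `(z_i, ν_i, b_i)` (distinct `z_i ∈ ℂ`, critical values
`b_i ∈ ℂ ∪ {∞}` — encoded as `Option ℂ` with `none = ∞` — with at least 3
distinct values, `∑ ν_i` even, and each value's total multiplicity at most
`(∑ ν_l)/2`), with `n = 1 + (∑ ν_i)/2`, any two pairs `(P,Q)` and `(p,q)` of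
polynomials of degree at most `n` in the kernel of the critical evaluation map
are proportional. -/
theorem critical_evaluation_kernel_at_most_one_dimensional
    (s : ℕ) (z : Fin s → ℂ) (hz : Function.Injective z)
    (ν : Fin s → ℕ) (b : Fin s → Option ℂ)
    (hb3 : 3 ≤ (Finset.univ.image b).card)
    (heven : Even (∑ i, ν i))
    (hhalf : ∀ i, (∑ j ∈ Finset.univ.filter fun j => b j = b i, ν j) ≤ (∑ l, ν l) / 2)
    (n : ℕ) (hn : n = 1 + (∑ i, ν i) / 2)
    (P Q p q : Polynomial ℂ)
    (hP : P.natDegree ≤ n) (hQ : Q.natDegree ≤ n)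
    (hp : p.natDegree ≤ n) (hq : q.natDegree ≤ n)
    (hker : ∀ i, match b i with
      | some w => ∀ l ≤ ν i,
          (derivative^[l] P).eval (z i) = w * (derivative^[l] Q).eval (z i)
      | none => ∀ l ≤ ν i, (derivative^[l] Q).eval (z i) = 0)
    (hker' : ∀ i, match b i with
      | some w => ∀ l ≤ ν i,
          (derivative^[l] p).eval (z i) = w * (derivative^[l] q).eval (z i)
      | none => ∀ l ≤ ν i, (derivative^[l] q).eval (z i) = 0) :
    ∃ c d : ℂ, (c ≠ 0 ∨ d ≠ 0) ∧ c • P = d • p ∧ c • Q = d • q := by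
  obtain ⟨M, hM⟩ := heven
  obtain rfl : n = M + 1 := by omega
  have hhalfM : ∀ i, ∑ j ∈ univ.filter (fun j => b j = b i), ν j ≤ M :=
    fun i => (hhalf i).trans (by omega)
  have hdvd : ∀ i, (X - C (z i)) ^ (ν i + 1) ∣ numeratorSub (b i) P Q ∧
      (X - C (z i)) ^ (ν i + 1) ∣ numeratorSub (b i) p q := by
    intro i
    have h := hker i
    have h' := hker' i
    cases hbi : b i <;> simp only [hbi] at h h'
    · exact ⟨pow_succ_dvd_of_iterate_derivative_eval_eq_zero h,
        pow_succ_dvd_of_iterate_derivative_eval_eq_zero h'⟩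
    · exact ⟨pow_succ_dvd_sub_C_mul_of_iterate_derivative_eval_eq h,
        pow_succ_dvd_sub_C_mul_of_iterate_derivative_eval_eq h'⟩
  have hs : 3 ≤ Fintype.card (Fin s) := hb3.trans (card_image_le.trans_eq card_univ)
  have hcross := mul_eq_mul_of_pow_dvd_numeratorSub hs hz hM hP hQ hp hq
    (fun i => (hdvd i).1) (fun i => (hdvd i).2)
  by_cases hPQ : P = 0 ∧ Q = 0
  · exact ⟨1, 0, by simp [hPQ]⟩
  obtain ⟨g, P₀, Q₀, hg, hcop, rfl, rfl⟩ := exists_isCoprime_eq_mul (not_and_or.mp hPQ)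
  have hcross₀ : P₀ * q = p * Q₀ := mul_left_cancel₀ hg (by linear_combination hcross)
  obtain ⟨g', rfl, rfl⟩ := hcop.exists_eq_mul_of_mul_eq_mul hcross₀
  simp only [numeratorSub_mul] at hdvd
  obtain ⟨c, d, hcd, h⟩ := exists_C_mul_eq_C_mul_of_pow_dvd_mul_numeratorSub hz hb3 hM hhalfM
    hcop hg hP hQ hp hq (fun i => (hdvd i).1) (fun i => (hdvd i).2)
  refine ⟨c, d, hcd, ?_, ?_⟩ <;> rw [smul_eq_C_mul, smul_eq_C_mul, ← mul_assoc, ← mul_assoc, h]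
end
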